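/- arXiv:2512.18676 — 11 statements merged into one kernel-verified Lean document; each statement's English description precedes it below -/
import Mathlib

section
/- Let X be a normed space, {x_t} a sequence in X, {ω_t} a weighted sequence (i.e., there is β>0 with ω_t>β for all t), r≥0, and I an ideal on ℕ. If {ω_t} is not I-bounded (i.e., for every μ>0 the set {t : ω_t > μ} is not in I), then the rough weighted ideal limit set (ω_t,I)-LIM^r x_t contains at most one element. -/
open Filter Set

/-- An ideal on ℕ: contains ∅, closed under union and subsets. -/
def IsIdeal (I : Set (Set ℕ)) : Prop :=
  ∅ ∈ I ∧ (∀ A B : Set ℕ, A ∈ I → B ∈ I → A ∪ B ∈ I) ∧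
    (∀ A B : Set ℕ, A ⊆ B → B ∈ I → A ∈ I)

/-- A weighted sequence: bounded below by some positive β. -/
def IsWeighted (ω : ℕ → ℝ) : Prop := ∃ β > 0, ∀ t, ω t > β

/-- The rough weighted ideal limit set. -/
def RWLim {X : Type*} [NormedAddCommGroup X] (I : Set (Set ℕ)) (ω : ℕ → ℝ)
    (x : ℕ → X) (r : ℝ) : Set X :=
  {y | ∀ ε > 0, {t | ω t * ‖x t - y‖ > r + ε} ∈ I}

/-- The rough weighted ideal cluster point set. -/
def RWGamma {X : Type*} [NormedAddCommGroup X] (I : Set (Set ℕ)) (ω : ℕ → ℝ)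
    (x : ℕ → X) (r : ℝ) : Set X :=
  {γ | ∀ ε > 0, {t | ω t * ‖x t - γ‖ < r + ε} ∉ I}

theorem stmt0 {X : Type*} [NormedAddCommGroup X] [NormedSpace ℝ X]
    (I : Set (Set ℕ)) (hI : IsIdeal I) (ω : ℕ → ℝ) (hω : IsWeighted ω)
    (x : ℕ → X) (r : ℝ) (hr : 0 ≤ r)
    (hub : ∀ μ > 0, {t | ω t > μ} ∉ I) :
    (RWLim I ω x r).Subsingleton := by
  intro y₁ h₁ y₂ h₂
  by_contra hne
  have hd : 0 < ‖y₁ - y₂‖ := by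
    simpa [sub_eq_zero] using norm_pos_iff.mpr (sub_ne_zero.mpr hne)
  set d := ‖y₁ - y₂‖
  have hA := h₁ 1 one_pos
  have hB := h₂ 1 one_pos
  have hμ : (0:ℝ) < 2 * (r + 1) / d := by positivity
  refine hub _ hμ (hI.2.2 _ _ ?_ (hI.2.1 _ _ hA hB))
  intro t ht
  simp only [mem_union, mem_setOf_eq] at ht ⊢
  by_contra hc
  push_neg at hc
  obtain ⟨c1, c2⟩ := hc
  have htri : d ≤ ‖x t - y₁‖ + ‖x t - y₂‖ := by
    have := norm_sub_le (x t - y₂) (x t - y₁)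
    simpa [norm_sub_rev, sub_sub_sub_cancel_left] using norm_sub_le_norm_sub_add_norm_sub y₁ (x t) y₂
  have hωpos : 0 < ω t := by
    obtain ⟨β, hβ, hb⟩ := hω
    exact hβ.trans (hb t)
  have h1 : ω t * d ≤ 2 * (r + 1) := by
    calc ω t * d ≤ ω t * (‖x t - y₁‖ + ‖x t - y₂‖) := by
          exact mul_le_mul_of_nonneg_left htri hωpos.le
      _ = ω t * ‖x t - y₁‖ + ω t * ‖x t - y₂‖ := by ring
      _ ≤ (r + 1) + (r + 1) := add_le_add c1 c2
      _ = 2 * (r + 1) := by ring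
  have : ω t ≤ 2 * (r + 1) / d := (le_div_iff₀ hd).mpr h1
  linarith
end

section
/- Let X be a normed space, {x_t} a sequence in X, {ω_t} a weighted sequence, r≥0, and I an ideal on ℕ. Then the rough weighted ideal limit set (ω_t,I)-LIM^r x_t is a closed subset of X. -/
open Filter Set

theorem stmt2 {X : Type*} [NormedAddCommGroup X] [NormedSpace ℝ X]
    (I : Set (Set ℕ)) (hI : IsIdeal I) (ω : ℕ → ℝ) (hω : IsWeighted ω)
    (x : ℕ → X) (r : ℝ) (hr : 0 ≤ r) :
    IsClosed (RWLim I ω x r) := by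
  apply isClosed_of_closure_subset
  intro y hy
  by_cases hyy : y ∈ RWLim I ω x r
  · exact hyy
  obtain ⟨β, hβ, hβω⟩ := hω
  -- a fixed point z₀ of RWLim, distinct from y
  obtain ⟨z₀, hz₀, _⟩ := Metric.mem_closure_iff.mp hy 1 one_pos
  have hz₀y : z₀ ≠ y := fun h => hyy (h ▸ hz₀)
  set d := ‖z₀ - y‖ with hd
  have hd0 : 0 < d := by
    rw [hd, norm_pos_iff]
    exact sub_ne_zero_of_ne hz₀y
  simp only [RWLim, mem_setOf_eq]
  intro ε hε
  have h2rε : 0 < 2 * r + ε := by linarith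
  set δ := min (d / 2) (ε * d / (4 * (2 * r + ε))) with hδdef
  have hδ0 : 0 < δ := lt_min (by linarith) (by positivity)
  obtain ⟨z, hz, hzy⟩ := Metric.mem_closure_iff.mp hy δ hδ0
  have hzy' : ‖z - y‖ < δ := by
    rw [dist_eq_norm, norm_sub_rev] at hzy; exact hzy
  have hA : {t | ω t * ‖x t - z‖ > r + ε / 2} ∈ I := hz (ε / 2) (by linarith)
  have hB : {t | ω t * ‖x t - z₀‖ > r + ε / 2} ∈ I := hz₀ (ε / 2) (by linarith)
  apply hI.2.2 _ _ _ (hI.2.1 _ _ hA hB)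
  intro t ht
  simp only [mem_setOf_eq] at ht
  by_contra hcon
  simp only [mem_union, mem_setOf_eq, not_or, not_lt] at hcon
  obtain ⟨h1, h2⟩ := hcon
  have hωt : 0 < ω t := lt_trans hβ (hβω t)
  -- ω t is bounded: ω t * ‖z - z₀‖ ≤ 2r + ε and ‖z - z₀‖ ≥ d/2
  have htri : ‖z - z₀‖ ≤ ‖x t - z‖ + ‖x t - z₀‖ := by
    have h := norm_sub_le_norm_sub_add_norm_sub z (x t) z₀
    rwa [norm_sub_rev z (x t)] at h
  have hωzz : ω t * ‖z - z₀‖ ≤ 2 * r + ε := by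
    have := mul_le_mul_of_nonneg_left htri hωt.le
    nlinarith
  have hzz0 : d / 2 ≤ ‖z - z₀‖ := by
    have h := norm_sub_le_norm_sub_add_norm_sub z₀ z y
    rw [norm_sub_rev z₀ z] at h
    have hδd : δ ≤ d / 2 := min_le_left _ _
    have : d ≤ ‖z - z₀‖ + ‖z - y‖ := by rw [hd]; exact h
    linarith
  have hωd : ω t * d ≤ 2 * (2 * r + ε) := by nlinarith
  -- hence ω t * ‖z - y‖ ≤ ε / 2
  have hωδ : ω t * ‖z - y‖ ≤ ε / 2 := by
    have hδε : δ ≤ ε * d / (4 * (2 * r + ε)) := min_le_right _ _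
    have h1' : ω t * ‖z - y‖ ≤ ω t * (ε * d / (4 * (2 * r + ε))) :=
      mul_le_mul_of_nonneg_left (by linarith) hωt.le
    have h2' : ω t * (ε * d / (4 * (2 * r + ε))) = (ω t * d) * (ε / (4 * (2 * r + ε))) := by
      ring
    have h3' : (ω t * d) * (ε / (4 * (2 * r + ε))) ≤ (2 * (2 * r + ε)) * (ε / (4 * (2 * r + ε))) :=
      mul_le_mul_of_nonneg_right hωd (by positivity)
    have h4' : (2 * (2 * r + ε)) * (ε / (4 * (2 * r + ε))) = ε / 2 := by
      field_simp
      ring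
    linarith [h1', h3', h2' ▸ h1']
  -- final triangle inequality
  have htri2 : ‖x t - y‖ ≤ ‖x t - z‖ + ‖z - y‖ :=
    norm_sub_le_norm_sub_add_norm_sub (x t) z y
  have := mul_le_mul_of_nonneg_left htri2 hωt.le
  nlinarith
end

section
/- Let X be a normed space, {x_t} a sequence in X, {ω_t} a weighted sequence, r≥0, and I an ideal on ℕ. Then the rough weighted ideal limit set (ω_t,I)-LIM^r x_t is a convex subset of X. -/
open Filter Set

theorem stmt3 {X : Type*} [NormedAddCommGroup X] [NormedSpace ℝ X]
    (I : Set (Set ℕ)) (hI : IsIdeal I) (ω : ℕ → ℝ) (hω : IsWeighted ω)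
    (x : ℕ → X) (r : ℝ) (hr : 0 ≤ r) :
    Convex ℝ (RWLim I ω x r) := by
  obtain ⟨β, hβ, hωβ⟩ := hω
  intro y₁ h₁ y₂ h₂ a b ha hb hab
  intro ε hε
  obtain ⟨_, hunion, hsub⟩ := hI
  refine hsub _ _ ?_ (hunion _ _ (h₁ ε hε) (h₂ ε hε))
  intro t ht
  simp only [Set.mem_setOf_eq] at ht
  by_contra hc
  simp only [Set.mem_union, Set.mem_setOf_eq, not_or, not_lt] at hc
  obtain ⟨hc₁, hc₂⟩ := hc
  have hωt : (0:ℝ) ≤ ω t := le_of_lt (lt_trans hβ (hωβ t))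
  have key : ω t * ‖x t - (a • y₁ + b • y₂)‖ ≤ a * (ω t * ‖x t - y₁‖) + b * (ω t * ‖x t - y₂‖) := by
    have h1 : x t - (a • y₁ + b • y₂) = a • (x t - y₁) + b • (x t - y₂) := by
      conv_lhs => rw [← one_smul ℝ (x t), ← hab, add_smul]
      rw [smul_sub, smul_sub]; abel
    calc ω t * ‖x t - (a • y₁ + b • y₂)‖
        ≤ ω t * (a * ‖x t - y₁‖ + b * ‖x t - y₂‖) := by
          apply mul_le_mul_of_nonneg_left _ hωt
          rw [h1]
          calc ‖a • (x t - y₁) + b • (x t - y₂)‖ ≤ ‖a • (x t - y₁)‖ + ‖b • (x t - y₂)‖ :=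
                norm_add_le _ _
            _ = a * ‖x t - y₁‖ + b * ‖x t - y₂‖ := by
                rw [norm_smul, norm_smul, Real.norm_eq_abs, Real.norm_eq_abs,
                  abs_of_nonneg ha, abs_of_nonneg hb]
      _ = a * (ω t * ‖x t - y₁‖) + b * (ω t * ‖x t - y₂‖) := by ring
  have : ω t * ‖x t - (a • y₁ + b • y₂)‖ ≤ r + ε := by
    calc ω t * ‖x t - (a • y₁ + b • y₂)‖ ≤ a * (ω t * ‖x t - y₁‖) + b * (ω t * ‖x t - y₂‖) := key
      _ ≤ a * (r + ε) + b * (r + ε) := by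
          gcongr <;> assumption
      _ = r + ε := by rw [← add_mul, hab, one_mul]
  linarith
end

section
/- Let X be a normed space, {x_t} a sequence in X, {ω_t} a weighted sequence that is I-bounded by μ>0 (i.e., {t : ω_t > μ} ∈ I), r,σ ≥ 0, and I an ideal on ℕ. Then (ω_t,I)-LIM^r x_t + σ·B_X ⊆ (ω_t,I)-LIM^{r+σμ} x_t, where B_X is the closed unit ball of X. -/
open Filter Set

theorem stmt4 {X : Type*} [NormedAddCommGroup X] [NormedSpace ℝ X]
    (I : Set (Set ℕ)) (hI : IsIdeal I) (ω : ℕ → ℝ) (hω : IsWeighted ω)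
    (x : ℕ → X) (r σ μ : ℝ) (hr : 0 ≤ r) (hσ : 0 ≤ σ) (hμ : 0 < μ)
    (hb : {t | ω t > μ} ∈ I) :
    ∀ a ∈ RWLim I ω x r, ∀ b : X, ‖b‖ ≤ 1 →
      a + σ • b ∈ RWLim I ω x (r + σ * μ) := by
  obtain ⟨β, hβ, hωβ⟩ := hω
  intro a ha b hbnorm ε hε
  have h1 : {t | ω t * ‖x t - a‖ > r + ε} ∈ I := ha ε hε
  refine hI.2.2 _ _ ?_ (hI.2.1 _ _ h1 hb)
  intro t ht
  simp only [mem_setOf_eq, mem_union] at ht ⊢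
  by_contra hcon
  push_neg at hcon
  obtain ⟨h2, h3⟩ := hcon
  have hω0 : 0 ≤ ω t := le_of_lt (hβ.trans (hωβ t))
  have key : ω t * ‖x t - (a + σ • b)‖ ≤ ω t * ‖x t - a‖ + σ * ω t := by
    have : ‖x t - (a + σ • b)‖ ≤ ‖x t - a‖ + σ * ‖b‖ := by
      calc ‖x t - (a + σ • b)‖ = ‖(x t - a) + (-(σ • b))‖ := by congr 1; abel
        _ ≤ ‖x t - a‖ + ‖-(σ • b)‖ := norm_add_le _ _
        _ = ‖x t - a‖ + σ * ‖b‖ := by rw [norm_neg, norm_smul, Real.norm_of_nonneg hσ]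
    calc ω t * ‖x t - (a + σ • b)‖ ≤ ω t * (‖x t - a‖ + σ * ‖b‖) :=
          mul_le_mul_of_nonneg_left this hω0
      _ ≤ ω t * (‖x t - a‖ + σ * 1) := by
          gcongr
      _ = ω t * ‖x t - a‖ + σ * ω t := by ring
  have : ω t * ‖x t - (a + σ • b)‖ ≤ (r + ε) + σ * μ := by
    calc ω t * ‖x t - (a + σ • b)‖ ≤ ω t * ‖x t - a‖ + σ * ω t := key
      _ ≤ (r + ε) + σ * μ := by
        gcongr
  linarith [ht]
end

section
/- Let X be a normed space, {x_t} a sequence in X, {ω_t} a weighted sequence that is I-bounded, r ≥ 0, and I an ideal on ℕ. Then the set of rough weighted ideal cluster points (ω_t,I)-Γ^r_{x_t} is a closed subset of X. -/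
open Filter Set

theorem stmt12 {X : Type*} [NormedAddCommGroup X] [NormedSpace ℝ X]
    (I : Set (Set ℕ)) (hI : IsIdeal I) (ω : ℕ → ℝ) (hω : IsWeighted ω)
    (μ : ℝ) (hμ : 0 < μ) (hb : {t | ω t > μ} ∈ I)
    (x : ℕ → X) (r : ℝ) (hr : 0 ≤ r) :
    IsClosed (RWGamma I ω x r) := by
  obtain ⟨β, hβ, hβω⟩ := hω
  refine isClosed_of_closure_subset ?_
  intro γ hγ ε hε hA
  -- pick γ' in the set close to γ
  have hδ : 0 < ε / (2 * μ) := by positivity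
  obtain ⟨γ', hγ'mem, hγ'close⟩ := Metric.mem_closure_iff.mp hγ (ε / (2 * μ)) hδ
  have hB := hγ'mem (ε / 2) (by positivity)
  apply hB
  refine hI.2.2 _ ({t | ω t * ‖x t - γ‖ < r + ε} ∪ {t | ω t > μ}) ?_
    (hI.2.1 _ _ hA hb)
  intro t ht
  by_cases hμt : ω t > μ
  · exact Or.inr hμt
  left
  push_neg at hμt
  have hωt : 0 < ω t := lt_trans hβ (hβω t)
  have h1 : ‖x t - γ‖ ≤ ‖x t - γ'‖ + ‖γ' - γ‖ := by
    have := norm_add_le (x t - γ') (γ' - γ)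
    simpa [sub_add_sub_cancel] using this
  have h2 : ω t * ‖x t - γ‖ ≤ ω t * ‖x t - γ'‖ + ω t * ‖γ' - γ‖ := by
    rw [← mul_add]; exact mul_le_mul_of_nonneg_left h1 hωt.le
  have h3 : ω t * ‖γ' - γ‖ ≤ μ * (ε / (2 * μ)) := by
    have hd : ‖γ' - γ‖ < ε / (2 * μ) := by
      simpa [dist_eq_norm, norm_sub_rev] using hγ'close
    calc ω t * ‖γ' - γ‖ ≤ μ * ‖γ' - γ‖ :=
          mul_le_mul_of_nonneg_right hμt (norm_nonneg _)
      _ ≤ μ * (ε / (2 * μ)) := mul_le_mul_of_nonneg_left hd.le hμ.le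
  have h4 : μ * (ε / (2 * μ)) = ε / 2 := by field_simp
  have ht' : ω t * ‖x t - γ'‖ < r + ε / 2 := ht
  calc ω t * ‖x t - γ‖ ≤ ω t * ‖x t - γ'‖ + ω t * ‖γ' - γ‖ := h2
    _ < r + ε / 2 + ε / 2 := by linarith [h3, h4]
    _ = r + ε := by ring
end

section
/- Let I be a maximal admissible ideal on ℕ, X a normed space, {ω_t} a weighted sequence, {x_t} a sequence in X, and r ≥ 0. Then (ω_t,I)-Γ^r_{x_t} is a closed subset of X. -/
open Filter Set

theorem stmt13 {X : Type*} [NormedAddCommGroup X] [NormedSpace ℝ X]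
    (I : Set (Set ℕ)) (hI : IsIdeal I)
    (hadm : ∀ t : ℕ, {t} ∈ I) (hnt : (Set.univ : Set ℕ) ∉ I)
    (hmax : ∀ A : Set ℕ, A ∈ I ∨ Aᶜ ∈ I)
    (ω : ℕ → ℝ) (hω : IsWeighted ω) (x : ℕ → X) (r : ℝ) (hr : 0 ≤ r) :
    IsClosed (RWGamma I ω x r) := by
  obtain ⟨β, hβ, hβω⟩ := hω
  have hωpos : ∀ t, 0 < ω t := fun t => hβ.trans (hβω t)
  by_cases h : ∃ M : ℝ, 0 < M ∧ {t | ω t > M} ∈ I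
  · -- weights bounded modulo the ideal
    obtain ⟨M, hM, hMI⟩ := h
    refine isClosed_of_closure_subset ?_
    intro y hy ε hε hS
    obtain ⟨γ, hγ, hd⟩ := Metric.mem_closure_iff.mp hy (ε / (2 * M)) (by positivity)
    refine hγ (ε / 2) (by positivity) ?_
    refine hI.2.2 _ _ ?_ (hI.2.1 _ _ hS hMI)
    intro t ht
    simp only [Set.mem_setOf_eq] at ht
    by_cases hωt : ω t > M
    · exact Or.inr hωt
    · left
      push_neg at hωt
      have h1 : ‖x t - y‖ ≤ ‖x t - γ‖ + ‖γ - y‖ := norm_sub_le_norm_sub_add_norm_sub _ _ _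
      have h2 : ‖γ - y‖ < ε / (2 * M) := by
        rw [dist_eq_norm, norm_sub_rev] at hd; exact hd
      have h3 : 0 ≤ ‖x t - γ‖ := norm_nonneg _
      have h4 : 0 ≤ ‖γ - y‖ := norm_nonneg _
      have h5 : 0 < ω t := hωpos t
      have h6 : M * (ε / (2 * M)) = ε / 2 := by field_simp
      have h7 : ω t * ‖γ - y‖ ≤ M * (ε / (2 * M)) :=
        mul_le_mul hωt h2.le h4 hM.le
      show ω t * ‖x t - y‖ < r + ε
      nlinarith [mul_le_mul_of_nonneg_left h1 h5.le]
  · -- weights unbounded on every set outside the ideal: the Gamma set is a subsingleton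
    push_neg at h
    have hsub : (RWGamma I ω x r).Subsingleton := by
      intro γ hγ γ' hγ'
      by_contra hne
      have hdpos : 0 < ‖γ - γ'‖ := by
        simpa [norm_sub_eq_zero_iff] using norm_pos_iff.mpr (sub_ne_zero.mpr hne)
      set d := ‖γ - γ'‖ with hdd
      set M := 2 * (r + 1) / d with hMd
      have hMpos : 0 < M := by positivity
      have hB : {t | ω t ≤ M} ∈ I := by
        rcases hmax {t | ω t > M} with hA | hA
        · exact absurd hA (h M hMpos)
        · have : {t | ω t > M}ᶜ = {t | ω t ≤ M} := by
            ext t; simp [not_lt]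
          rwa [this] at hA
      have hA1 : {t | ω t * ‖x t - γ‖ < r + 1}ᶜ ∈ I := by
        rcases hmax {t | ω t * ‖x t - γ‖ < r + 1} with hA | hA
        · exact absurd hA (hγ 1 one_pos)
        · exact hA
      have hA2 : {t | ω t * ‖x t - γ'‖ < r + 1}ᶜ ∈ I := by
        rcases hmax {t | ω t * ‖x t - γ'‖ < r + 1} with hA | hA
        · exact absurd hA (hγ' 1 one_pos)
        · exact hA
      have hun : ({t | ω t * ‖x t - γ‖ < r + 1}ᶜ ∪ {t | ω t * ‖x t - γ'‖ < r + 1}ᶜ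
          ∪ {t | ω t ≤ M}) ∈ I := hI.2.1 _ _ (hI.2.1 _ _ hA1 hA2) hB
      have hne' : ({t | ω t * ‖x t - γ‖ < r + 1}ᶜ ∪ {t | ω t * ‖x t - γ'‖ < r + 1}ᶜ
          ∪ {t | ω t ≤ M}) ≠ Set.univ := by
        intro hEq
        exact hnt (hEq ▸ hun)
      obtain ⟨t, ht⟩ := (Set.ne_univ_iff_exists_notMem _).mp hne'
      simp only [Set.mem_union, Set.mem_compl_iff, Set.mem_setOf_eq, not_or, not_not,
        not_le] at ht
      obtain ⟨⟨h1, h2⟩, h3⟩ := ht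
      have h5 : 0 < ω t := hωpos t
      have hn1 : ‖x t - γ‖ < (r + 1) / ω t := by
        rw [lt_div_iff₀ h5]; linarith [mul_comm (ω t) ‖x t - γ‖, h1]
      have hn2 : ‖x t - γ'‖ < (r + 1) / ω t := by
        rw [lt_div_iff₀ h5]; linarith [mul_comm (ω t) ‖x t - γ'‖, h2]
      have hdiv : (r + 1) / ω t < d / 2 := by
        rw [div_lt_div_iff₀ h5 two_pos]
        rw [hMd, div_lt_iff₀ hdpos] at h3
        nlinarith
      have htri : d ≤ ‖x t - γ‖ + ‖x t - γ'‖ := by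
        have := norm_sub_le_norm_sub_add_norm_sub γ (x t) γ'
        simpa [norm_sub_rev] using this
      linarith
    exact hsub.isClosed
end

section
/- Let X be a nontrivial normed space (containing a unit vector for each t), r ≥ 0, {ω_t} a weighted sequence, and I an admissible ideal on ℕ. Then I is maximal if and only if for every sequence {x_t} in X, (ω_t,I)-LIM^r x_t = (ω_t,I)-Γ^r_{x_t}. -/
open Filter Set

theorem stmt14 {X : Type*} [NormedAddCommGroup X] [NormedSpace ℝ X]
    (hX : ∃ s : X, ‖s‖ = 1)
    (I : Set (Set ℕ)) (hI : IsIdeal I)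
    (hadm : ∀ A : Set ℕ, A.Finite → A ∈ I) (hnt : (Set.univ : Set ℕ) ∉ I)
    (ω : ℕ → ℝ) (hω : IsWeighted ω) (r : ℝ) (hr : 0 ≤ r) :
    (∀ A : Set ℕ, A ∈ I ∨ Aᶜ ∈ I) ↔
      ∀ x : ℕ → X, RWLim I ω x r = RWGamma I ω x r := by
  obtain ⟨hempty, hunion, hsub⟩ := hI
  constructor
  · intro hmax x
    ext y
    simp only [RWLim, RWGamma, mem_setOf_eq]
    constructor
    · intro hy ε hε hmem
      have h2 := hy (ε/2) (by linarith)
      apply hnt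
      apply hsub _ ({t | ω t * ‖x t - y‖ > r + ε/2} ∪ {t | ω t * ‖x t - y‖ < r + ε})
      · intro t _
        by_cases h : ω t * ‖x t - y‖ < r + ε
        · exact Or.inr h
        · push_neg at h
          exact Or.inl (by simp only [mem_setOf_eq]; linarith)
      · exact hunion _ _ h2 hmem
    · intro hy ε hε
      rcases hmax {t | ω t * ‖x t - y‖ > r + ε} with h | h
      · exact h
      · exfalso
        apply hy ε hε
        apply hsub _ _ _ h
        intro t ht
        simp only [mem_setOf_eq] at ht
        simp only [mem_compl_iff, mem_setOf_eq]
        intro h'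
        linarith
  · intro heq A
    by_cases hA : A ∈ I
    · exact Or.inl hA
    · right
      classical
      obtain ⟨s, hs⟩ := hX
      obtain ⟨β, hβ, hωβ⟩ := hω
      set x : ℕ → X := fun t => if t ∈ A then 0 else ((r+1)/ω t) • s with hxdef
      have hωt : ∀ t, (0:ℝ) < ω t := fun t => lt_trans hβ (hωβ t)
      have hval : ∀ t, ω t * ‖x t - 0‖ = if t ∈ A then 0 else r + 1 := by
        intro t
        by_cases ht : t ∈ A
        · simp [hxdef, ht]
        · have h0 : (0:ℝ) < (r+1)/ω t := div_pos (by linarith) (hωt t)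
          simp only [hxdef, ht, if_false, sub_zero, norm_smul, hs, mul_one,
            Real.norm_eq_abs, abs_of_pos h0]
          rw [mul_div_cancel₀ _ (hωt t).ne']
      have hgamma : (0:X) ∈ RWGamma I ω x r := by
        intro ε hε hmem
        apply hA
        apply hsub _ _ _ hmem
        intro t ht
        simp only [mem_setOf_eq, hval t, if_pos ht]
        linarith
      rw [← heq x] at hgamma
      have h12 := hgamma (1/2) (by norm_num)
      apply hsub _ _ _ h12
      intro t ht
      simp only [mem_compl_iff] at ht
      simp only [mem_setOf_eq, hval t, if_neg ht]
      linarith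
end

section
/- Let X be a separable normed space, I a non-trivial ideal on ℕ, {ω_t} an I-bounded weighted sequence, and suppose there exists a pairwise disjoint sequence {A_t} of subsets of ℕ with A_t ∉ I for all t. Then for every nonempty closed set F ⊆ X there exists a sequence {x_t} in X such that F = ⋂_{r>0} (ω_t,I)-Γ^r_{x_t}. -/
open Filter Set

theorem stmt15 {X : Type*} [NormedAddCommGroup X] [NormedSpace ℝ X]
    [TopologicalSpace.SeparableSpace X]
    (I : Set (Set ℕ)) (hI : IsIdeal I) (hnt : (Set.univ : Set ℕ) ∉ I)
    (ω : ℕ → ℝ) (hω : IsWeighted ω)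
    (μ : ℝ) (hμ : 0 < μ) (hb : {t | ω t > μ} ∈ I)
    (A : ℕ → Set ℕ) (hdisj : Pairwise (Function.onFun Disjoint A))
    (hA : ∀ t, A t ∉ I) :
    ∀ F : Set X, F.Nonempty → IsClosed F →
      ∃ x : ℕ → X, F = ⋂ (r : ℝ) (_ : 0 < r), RWGamma I ω x r := by
  intro F hFne hFcl
  obtain ⟨β, hβ, hωβ⟩ := hω
  obtain ⟨hIe, hIu, hIs⟩ := hI
  -- countable dense subset of F
  obtain ⟨c, hcF, hcc, hFc⟩ :=
    (TopologicalSpace.IsSeparable.of_separableSpace F).exists_countable_dense_subset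
  have hcne : c.Nonempty := by
    rcases hFne with ⟨p, hp⟩
    by_contra h
    rw [Set.not_nonempty_iff_eq_empty] at h
    have := hFc hp
    simp [h] at this
  obtain ⟨y, hy⟩ := (Set.countable_iff_exists_surjective hcne).1 hcc
  classical
  set x : ℕ → X := fun t => if h : ∃ n, t ∈ A n then (y h.choose : X) else (y 0 : X) with hx
  have hxF : ∀ t, x t ∈ F := by
    intro t
    simp only [hx]
    split <;> exact hcF (Subtype.coe_prop _)
  have hxA : ∀ n t, t ∈ A n → x t = y n := by
    intro n t ht
    have h : ∃ n, t ∈ A n := ⟨n, ht⟩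
    simp only [hx, dif_pos h]
    have : h.choose = n := by
      by_contra hne
      exact Set.disjoint_left.1 (hdisj hne) h.choose_spec ht
    rw [this]
  refine ⟨x, Set.Subset.antisymm ?_ ?_⟩
  · -- F ⊆ ⋂
    intro γ hγ
    simp only [Set.mem_iInter]
    intro r hr ε hε
    -- find n with ‖y n - γ‖ < (r+ε)/μ
    have hrε : 0 < (r + ε) / μ := div_pos (by linarith) hμ
    obtain ⟨z, hzc, hzd⟩ := Metric.mem_closure_iff.1 (hFc hγ) _ hrε
    obtain ⟨n, hn⟩ := hy ⟨z, hzc⟩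
    intro hmem
    apply hA n
    have hsub : A n ⊆ {t | ω t * ‖x t - γ‖ < r + ε} ∪ {t | ω t > μ} := by
      intro t ht
      by_cases hωt : ω t > μ
      · exact Or.inr hωt
      · left
        have hxt : x t = z := by rw [hxA n t ht, hn]
        have h1 : ‖x t - γ‖ = dist γ z := by
          rw [hxt, dist_comm, dist_eq_norm]
        have h0 : 0 < ω t := lt_trans hβ (hωβ t)
        have h2 : ω t * ‖x t - γ‖ ≤ μ * dist γ z := by
          rw [h1]
          exact mul_le_mul (not_lt.1 hωt) le_rfl dist_nonneg (le_of_lt hμ)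
        have h3 : μ * dist γ z < r + ε := by
          have := (lt_div_iff₀ hμ).1 hzd
          linarith [this]
        exact lt_of_le_of_lt h2 h3
    exact hIs _ _ hsub (hIu _ _ hmem hb)
  · -- ⋂ ⊆ F
    intro γ hγ
    by_contra hγF
    have hd : 0 < Metric.infDist γ F := by
      exact (hFcl.notMem_iff_infDist_pos hFne).1 hγF
    set d := Metric.infDist γ F
    have hγ' := Set.mem_iInter.1 hγ (β * d / 2)
    have hpos : 0 < β * d / 2 := by positivity
    have hγ'' := Set.mem_iInter.1 (hγ' ) hpos (β * d / 2) hpos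
    apply hγ''
    have : {t | ω t * ‖x t - γ‖ < β * d / 2 + β * d / 2} = ∅ := by
      ext t
      simp only [Set.mem_setOf_eq, Set.mem_empty_iff_false, iff_false, not_lt]
      have h1 : d ≤ ‖x t - γ‖ := by
        rw [← dist_eq_norm, dist_comm]
        exact Metric.infDist_le_dist_of_mem (hxF t)
      have h2 : β * d ≤ ω t * ‖x t - γ‖ :=
        mul_le_mul (le_of_lt (hωβ t)) h1 (le_of_lt hd) (le_of_lt (lt_trans hβ (hωβ t)))
      linarith
    rw [this]
    exact hIe
end

section
/- Let X be a normed space, I a non-trivial ideal on ℕ, {ω_t} a weighted sequence, {x_t} a sequence in X, and ℓ ∈ X. For A ⊆ ℕ define A_ℓ = {ω_t(x_t − ℓ) : t ∈ A}. Then ℓ ∈ (ω_t,I)-Γ^r_{x_t} for all r > 0 if and only if 0 lies in the closure of A_ℓ for every A in the dual filter F(I) (i.e., every A with ℕ∖A ∈ I). -/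
open Filter Set

theorem stmt16 {X : Type*} [NormedAddCommGroup X] [NormedSpace ℝ X]
    (I : Set (Set ℕ)) (hI : IsIdeal I) (hnt : (Set.univ : Set ℕ) ∉ I)
    (ω : ℕ → ℝ) (hω : IsWeighted ω) (x : ℕ → X) (ℓ : X) :
    (∀ r > 0, ℓ ∈ RWGamma I ω x r) ↔
      ∀ A : Set ℕ, Aᶜ ∈ I →
        (0 : X) ∈ closure {v : X | ∃ t ∈ A, v = ω t • (x t - ℓ)} := by
  obtain ⟨β, hβ, hωβ⟩ := hω
  have hωpos : ∀ t, 0 < ω t := fun t => lt_trans hβ (hωβ t)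
  have hnorm : ∀ t, ‖ω t • (x t - ℓ)‖ = ω t * ‖x t - ℓ‖ := by
    intro t
    rw [norm_smul, Real.norm_eq_abs, abs_of_pos (hωpos t)]
  constructor
  · intro h A hA
    rw [Metric.mem_closure_iff]
    intro δ hδ
    have hS : {t | ω t * ‖x t - ℓ‖ < δ / 2 + δ / 2} ∉ I :=
      h (δ / 2) (by linarith) (δ / 2) (by linarith)
    have : ¬ {t | ω t * ‖x t - ℓ‖ < δ / 2 + δ / 2} ⊆ Aᶜ := by
      intro hsub
      exact hS (hI.2.2 _ _ hsub hA)
    obtain ⟨t, ht, htA⟩ := Set.not_subset.mp this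
    refine ⟨ω t • (x t - ℓ), ⟨t, not_not.mp htA, rfl⟩, ?_⟩
    rw [dist_zero_left, hnorm]
    simpa using ht
  · intro h r hr ε hε hS
    have hA : (({t | ω t * ‖x t - ℓ‖ < r + ε} : Set ℕ)ᶜ)ᶜ ∈ I := by
      rwa [compl_compl]
    have := h _ hA
    rw [Metric.mem_closure_iff] at this
    obtain ⟨v, ⟨t, ht, rfl⟩, hd⟩ := this (r + ε) (by linarith)
    rw [dist_zero_left, hnorm] at hd
    exact ht hd
end

section
/- Let {x_t} be a sequence in a normed space X whose restriction to some set K ∉ I lies in a totally bounded subset Y of X, where I is an ideal on ℕ, and let {ω_t} be an I-bounded weighted sequence. Then for every r > 0, the rough weighted ideal cluster point set (ω_t,I)-Γ^r_{x_t} is nonempty. -/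
open Filter Set

lemma ideal_biUnion {α : Type*} {I : Set (Set ℕ)} (hI : IsIdeal I) {s : Set α}
    (hs : s.Finite) (f : α → Set ℕ) (h : ∀ c ∈ s, f c ∈ I) : (⋃ c ∈ s, f c) ∈ I := by
  induction s, hs using Set.Finite.induction_on with
  | empty => simpa using hI.1
  | @insert c s' _ _ ih =>
    rw [Set.biUnion_insert]
    exact hI.2.1 _ _ (h c (Set.mem_insert c s'))
      (ih (fun d hd => h d (Set.mem_insert_of_mem c hd)))

theorem stmt18 {X : Type*} [NormedAddCommGroup X] [NormedSpace ℝ X]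
    (I : Set (Set ℕ)) (hI : IsIdeal I) (ω : ℕ → ℝ) (hω : IsWeighted ω)
    (μ : ℝ) (hμ : 0 < μ) (hb : {t | ω t > μ} ∈ I)
    (x : ℕ → X) (K : Set ℕ) (hK : K ∉ I)
    (Y : Set X) (hY : TotallyBounded Y) (hxY : ∀ t ∈ K, x t ∈ Y) :
    ∀ r > 0, (RWGamma I ω x r).Nonempty := by
  intro r hr
  obtain ⟨s, hs, hcover⟩ := (Metric.totallyBounded_iff.mp hY) (r / μ) (by positivity)
  -- restrict to indices where ω t ≤ μ
  set K' : Set ℕ := K \ {t | ω t > μ} with hK'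
  have hK'notI : K' ∉ I := by
    intro h
    exact hK (hI.2.2 K (K' ∪ {t | ω t > μ})
      (fun t ht => if h' : ω t > μ then Or.inr h' else Or.inl ⟨ht, h'⟩)
      (hI.2.1 _ _ h hb))
  -- the sub-sets
  have hsub : K' ⊆ ⋃ c ∈ s, {t | t ∈ K' ∧ x t ∈ Metric.ball c (r / μ)} := by
    intro t ht
    have := hcover (hxY t ht.1)
    simp only [mem_iUnion] at this ⊢
    obtain ⟨c, hc, hb'⟩ := this
    exact ⟨c, hc, ht, hb'⟩
  -- some piece is not in I
  have : ∃ c ∈ s, {t | t ∈ K' ∧ x t ∈ Metric.ball c (r / μ)} ∉ I := by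
    by_contra h
    push_neg at h
    have hun : (⋃ c ∈ s, {t | t ∈ K' ∧ x t ∈ Metric.ball c (r / μ)}) ∈ I :=
      ideal_biUnion hI hs _ h
    exact hK'notI (hI.2.2 _ _ hsub hun)
  obtain ⟨c, _, hcI⟩ := this
  refine ⟨c, fun ε hε h => ?_⟩
  refine hcI (hI.2.2 _ _ (fun t ht => ?_) h)
  obtain ⟨⟨-, htω⟩, hball⟩ := ht
  have hωle : ω t ≤ μ := not_lt.mp htω
  have hωpos : 0 < ω t := by
    obtain ⟨β, hβ, hβω⟩ := hω
    exact lt_trans hβ (hβω t)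
  have hn : ‖x t - c‖ < r / μ := by
    rw [Metric.mem_ball, dist_eq_norm] at hball
    exact hball
  have : ω t * ‖x t - c‖ < r + ε := by
    calc ω t * ‖x t - c‖ ≤ μ * ‖x t - c‖ :=
          mul_le_mul_of_nonneg_right hωle (norm_nonneg _)
      _ < μ * (r / μ) := by
          exact mul_lt_mul_of_pos_left hn hμ
      _ = r := by field_simp
      _ < r + ε := by linarith
  exact this
end

section
/- Let φ be a lower semicontinuous submeasure on ℕ and I_φ = {A ⊆ ℕ : lim_{t→∞} φ(A ∖ [1,t]) = 0} the associated analytic P-ideal. Let X be a normed space, {ω_t} a weighted sequence, {x_t} a sequence in X, and r ≥ 0. Then the set (ω_t,I_φ)-LIM^r x_t is an F_{σδ} subset of X, i.e., a countable intersection of countable unions of closed sets (in particular a Borel set). -/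
open Filter Set

/-- A lower semicontinuous submeasure on ℕ. -/
structure LSCSubmeasure where
  φ : Set ℕ → ENNReal
  empty : φ ∅ = 0
  mono : ∀ ⦃A B : Set ℕ⦄, A ⊆ B → φ A ≤ φ B
  subadd : ∀ A B : Set ℕ, φ (A ∪ B) ≤ φ A + φ B
  fin : ∀ t : ℕ, φ {t} < ⊤
  lsc : ∀ A : Set ℕ, Filter.Tendsto (fun t => φ (A ∩ Set.Iic t)) Filter.atTop (nhds (φ A))

/-- The exhaustive ideal generated by a lscsm. -/
def ExhIdeal (m : LSCSubmeasure) : Set (Set ℕ) :=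
  {A | Filter.Tendsto (fun t => m.φ (A \ Set.Iic t)) Filter.atTop (nhds 0)}

theorem stmt19 {X : Type*} [NormedAddCommGroup X] [NormedSpace ℝ X]
    (m : LSCSubmeasure) (ω : ℕ → ℝ) (hω : IsWeighted ω)
    (x : ℕ → X) (r : ℝ) (hr : 0 ≤ r) :
    ∃ C : ℕ → ℕ → Set X, (∀ i j, IsClosed (C i j)) ∧
      RWLim (ExhIdeal m) ω x r = ⋂ i, ⋃ j, C i j := by
  classical
  -- A y ε : the set of "bad" indices
  set A : X → ℝ → Set ℕ := fun y ε => {t | ω t * ‖x t - y‖ > r + ε} with hA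
  refine ⟨fun i j =>
    {y | m.φ (A y (1 / ((i.unpair.1 : ℝ) + 1)) \ Set.Iic j) ≤ ((i.unpair.2 : ENNReal) + 1)⁻¹},
    ?_, ?_⟩
  · -- closedness
    intro i j
    set ε : ℝ := 1 / ((i.unpair.1 : ℝ) + 1)
    set c : ENNReal := ((i.unpair.2 : ENNReal) + 1)⁻¹
    apply IsSeqClosed.isClosed
    intro ys y hys hlim
    show m.φ (A y ε \ Set.Iic j) ≤ c
    refine le_of_tendsto' (m.lsc (A y ε \ Set.Iic j)) (fun s => ?_)
    set F : Set ℕ := (A y ε \ Set.Iic j) ∩ Set.Iic s with hF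
    have hFfin : F.Finite := (Set.finite_Iic s).subset Set.inter_subset_right
    have hev : ∀ᶠ n in atTop, ∀ t ∈ F, t ∈ A (ys n) ε \ Set.Iic j := by
      rw [hFfin.eventually_all]
      intro t ht
      have ht1 : ω t * ‖x t - y‖ > r + ε := ht.1.1
      have htj : t ∉ Set.Iic j := ht.1.2
      have hcont : Tendsto (fun n => ω t * ‖x t - ys n‖) atTop (nhds (ω t * ‖x t - y‖)) := by
        exact (tendsto_const_nhds.sub hlim).norm.const_mul _
      filter_upwards [hcont.eventually_const_lt ht1] with n hn
      exact ⟨hn, htj⟩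
    obtain ⟨n, hn⟩ := hev.exists
    exact le_trans (m.mono (fun t ht => hn t ht)) (hys n)
  · ext y
    simp only [RWLim, Set.mem_setOf_eq, Set.mem_iInter, Set.mem_iUnion]
    constructor
    · intro hy i
      have hεpos : (0:ℝ) < 1 / ((i.unpair.1 : ℝ) + 1) := by positivity
      have hmem := hy _ hεpos
      have : ∀ᶠ j in atTop, m.φ (A y (1 / ((i.unpair.1 : ℝ) + 1)) \ Set.Iic j)
          ≤ ((i.unpair.2 : ENNReal) + 1)⁻¹ := by
        refine hmem.eventually_le_const ?_
        simp
      exact this.exists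
    · intro hy ε hε
      obtain ⟨k, hk⟩ := exists_nat_one_div_lt hε
      have hsub : ∀ t, A y ε \ Set.Iic t ⊆ A y (1 / ((k : ℝ) + 1)) \ Set.Iic t := by
        intro t u hu
        exact ⟨lt_of_le_of_lt (by linarith [hk] : r + 1 / ((k:ℝ)+1) ≤ r + ε) hu.1, hu.2⟩
      have hkmem : A y (1 / ((k : ℝ) + 1)) ∈ ExhIdeal m := by
        rw [ExhIdeal, Set.mem_setOf_eq, ENNReal.tendsto_atTop_zero]
        intro δ hδ
        obtain ⟨n, hn⟩ := ENNReal.exists_inv_nat_lt hδ.ne'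
        obtain ⟨j, hj⟩ := hy (Nat.pair k n)
        rw [Nat.unpair_pair] at hj
        refine ⟨j, fun j' hj' => le_trans (m.mono ?_) (le_trans hj ?_)⟩
        · exact Set.diff_subset_diff_right (Set.Iic_subset_Iic.mpr hj')
        · calc ((n : ENNReal) + 1)⁻¹ ≤ (n : ENNReal)⁻¹ :=
                ENNReal.inv_le_inv.mpr (le_add_of_nonneg_right zero_le_one)
            _ ≤ δ := hn.le
      rw [ExhIdeal, Set.mem_setOf_eq]
      exact tendsto_of_tendsto_of_tendsto_of_le_of_le tendsto_const_nhds hkmem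
        (fun t => zero_le) (fun t => m.mono (hsub t))
end
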